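/- Let $X_A$ be a Hermitian matrix on $A = \mathbb{C}^{d_A}$ and $Y_{AB}$ a Hermitian matrix on $A \otimes B$ with $B = \mathbb{C}^{d_B}$, such that $X_A = -\mathrm{Tr}_B(Y_{AB})$. Let $\tilde{\lambda}$ be the nonincreasing spectrum of $X_A$ and $\lambda$ the nonincreasing spectrum of $Y_{AB}$. Let $\pi \in \{0,1\}^{d_A}$ and $\sigma \in \{0,1\}^{d_A d_B}$ be binary sequences, and let $\phi : \mathrm{Gr}_k(A) \to \mathrm{Gr}_{d_B k}(A \otimes B)$ be the map $\phi(V) = V \otimes B$. If there exists a subspace $W \leq A$ with $W \in S_\pi(X_A)$ and $W \otimes B \in S_\sigma(Y_{AB})$, then $\sum_{i=1}^{d_A} \pi(i) \tilde{\lambda}_i + \sum_{i=1}^{d_A d_B} \sigma(i) \lambda_i \leq 0$. -/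

import Mathlib

open Module Submodule Finset

noncomputable section

/-- The partial trace over the second factor:
`(Tr_B ρ)^{ik} = ∑_j ρ^{ij,kj}`. -/
def partialTraceB {dA dB : ℕ}
    (ρ : Matrix (Fin dA × Fin dB) (Fin dA × Fin dB) ℂ) : Matrix (Fin dA) (Fin dA) ℂ :=
  fun i k => ∑ j : Fin dB, ρ (i, j) (k, j)

/-- The subspace spanned by the first `i` vectors of the family `v`. -/
def flagOf {ι : Type*} [Fintype ι] {N : ℕ} (v : Fin N → EuclideanSpace ℂ ι) (i : ℕ) :
    Submodule ℂ (EuclideanSpace ℂ ι) :=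
  Submodule.span ℂ (v '' {j | (j : ℕ) < i})

/-- The Schubert cell `S_π` attached to the flag spanned by the family `v`. -/
def schubertCell {ι : Type*} [Fintype ι] {N : ℕ} (v : Fin N → EuclideanSpace ℂ ι)
    (π : Fin N → ℕ) : Set (Submodule ℂ (EuclideanSpace ℂ ι)) :=
  {V | ∀ i : Fin N,
    finrank ℂ (V ⊓ flagOf v ((i : ℕ) + 1) : Submodule ℂ (EuclideanSpace ℂ ι)) =
      finrank ℂ (V ⊓ flagOf v (i : ℕ) : Submodule ℂ (EuclideanSpace ℂ ι)) + π i}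

/-- The linear map `ℂ^{d_A d_B} → ℂ^{d_A}` slicing out the `j`-th block. -/
def sliceMap (dA dB : ℕ) (j : Fin dB) :
    EuclideanSpace ℂ (Fin dA × Fin dB) →ₗ[ℂ] EuclideanSpace ℂ (Fin dA) where
  toFun x := WithLp.toLp 2 (fun i => x (i, j))
  map_add' _ _ := rfl
  map_smul' _ _ := rfl

/-- The map `φ : Gr_k(A) → Gr_{d_B k}(A ⊗ B)`, `φ(V) = V ⊗ B`: a vector of
`ℂ^{d_A} ⊗ ℂ^{d_B}` lies in `V ⊗ B` iff all its slices lie in `V`. -/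
def phiMap {dA dB : ℕ} (W : Submodule ℂ (EuclideanSpace ℂ (Fin dA))) :
    Submodule ℂ (EuclideanSpace ℂ (Fin dA × Fin dB)) :=
  ⨅ j : Fin dB, Submodule.comap (sliceMap dA dB j) W


set_option maxHeartbeats 1000000

lemma flagOf_zero {ι : Type*} [Fintype ι] {N : ℕ} (v : Fin N → EuclideanSpace ℂ ι) :
    flagOf v 0 = ⊥ := by
  have : {j : Fin N | (j : ℕ) < 0} = ∅ := by ext j; simp
  simp [flagOf, this]

lemma flagOf_top {ι : Type*} [Fintype ι] {N : ℕ} (hcard : Fintype.card ι = N)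
    (v : Fin N → EuclideanSpace ℂ ι) (hv : Orthonormal ℂ v) :
    flagOf v N = ⊤ := by
  have h1 : {j : Fin N | (j : ℕ) < N} = Set.univ := by ext j; simp [j.isLt]
  have h2 : v '' {j : Fin N | (j : ℕ) < N} = Set.range v := by rw [h1, Set.image_univ]
  rw [flagOf, h2]
  exact hv.linearIndependent.span_eq_top_of_card_eq_finrank'
    (by simp [hcard, finrank_euclideanSpace])

lemma inner_flag_eq_zero {ι : Type*} [Fintype ι] {N : ℕ}
    (v : Fin N → EuclideanSpace ℂ ι) (hv : Orthonormal ℂ v) {m : ℕ} (i : Fin N)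
    (hi : m ≤ (i : ℕ)) {x : EuclideanSpace ℂ ι} (hx : x ∈ flagOf v m) :
    (inner ℂ (v i) x : ℂ) = 0 := by
  have hle : flagOf v m ≤ LinearMap.ker ((innerₛₗ ℂ (v i)) :
      EuclideanSpace ℂ ι →ₗ[ℂ] ℂ) := by
    rw [flagOf, Submodule.span_le]
    rintro y ⟨j, hj, rfl⟩
    simp only [SetLike.mem_coe, LinearMap.mem_ker, innerₛₗ_apply_apply]
    exact hv.2 (fun h => by simp at hj; omega)
  have := hle hx
  simpa using this

lemma abel_aux (f g : ℕ → ℝ) : ∀ n : ℕ, (∀ i, i + 2 ≤ n → f (i + 1) ≤ f i) →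
    (∀ m, m ≤ n → 0 ≤ ∑ i ∈ Finset.range m, g i) →
    f (n - 1) * ∑ i ∈ Finset.range n, g i ≤ ∑ i ∈ Finset.range n, f i * g i := by
  intro n
  induction n with
  | zero => intro _ _; simp
  | succ n ih =>
    intro hf hg
    have h1 : f n ≤ f (n - 1) := by
      rcases n with _ | m
      · simp
      · exact hf m (by omega)
    have h2 := ih (fun i hi => hf i (by omega)) (fun m hm => hg m (by omega))
    rw [Finset.sum_range_succ, Finset.sum_range_succ]
    have h3 : f (n - 1) * ∑ i ∈ Finset.range n, g i ≥ f n * ∑ i ∈ Finset.range n, g i :=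
      mul_le_mul_of_nonneg_right h1 (hg n (by omega))
    have : f (n + 1 - 1) = f n := by norm_num
    rw [this, mul_add]
    nlinarith [h2, h3]

lemma abel_main (f g : ℕ → ℝ) (n : ℕ) (hf : ∀ i, i + 2 ≤ n → f (i + 1) ≤ f i)
    (hg : ∀ m, m ≤ n → 0 ≤ ∑ i ∈ Finset.range m, g i)
    (hgn : ∑ i ∈ Finset.range n, g i = 0) :
    0 ≤ ∑ i ∈ Finset.range n, f i * g i := by
  have h := abel_aux f g n hf hg
  rw [hgn, mul_zero] at h
  exact h

lemma parseval {ι : Type*} [Fintype ι] {F : Type*} [NormedAddCommGroup F]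
    [InnerProductSpace ℂ F] (b : OrthonormalBasis ι ℂ F) (x : F) :
    ∑ i, ‖(inner ℂ (b i) x : ℂ)‖ ^ 2 = ‖x‖ ^ 2 := by
  have h : ‖b.repr x‖ = ‖x‖ := b.repr.norm_map x
  rw [← h, EuclideanSpace.norm_eq, Real.sq_sqrt (by positivity)]
  exact Finset.sum_congr rfl fun i _ => by rw [b.repr_apply_apply]

lemma schubert_bound {ι : Type*} [Fintype ι] [DecidableEq ι] {N : ℕ}
    (hcard : Fintype.card ι = N)
    (v : Fin N → EuclideanSpace ℂ ι) (hv : Orthonormal ℂ v)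
    (lam : Fin N → ℝ) (hlam : Antitone lam)
    (π : Fin N → ℕ) (W : Submodule ℂ (EuclideanSpace ℂ ι))
    (hW : W ∈ schubertCell v π) :
    ∑ i, (π i : ℝ) * lam i ≤
      ∑ i, lam i * ‖(orthogonalProjection W (v i) : EuclideanSpace ℂ ι)‖ ^ 2 := by
  classical

  -- full orthonormal basis from v
  have hspan : ⊤ ≤ Submodule.span ℂ (Set.range v) := by
    rw [hv.linearIndependent.span_eq_top_of_card_eq_finrank'
      (by simp [hcard, finrank_euclideanSpace])]
  set vb : OrthonormalBasis (Fin N) ℂ (EuclideanSpace ℂ ι) := OrthonormalBasis.mk hv hspan with hvb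
  have hvb_eq : ∀ i, vb i = v i := fun i => by rw [hvb, OrthonormalBasis.coe_mk]
  set c' : ℕ → ℝ := fun n =>
    if h : n < N then ‖(orthogonalProjection W (v ⟨n, h⟩) : (EuclideanSpace ℂ ι))‖ ^ 2 else 0 with hc'
  set p' : ℕ → ℝ := fun n => if h : n < N then (π ⟨n, h⟩ : ℝ) else 0 with hp'
  set f : ℕ → ℝ := fun n => if h : n < N then lam ⟨n, h⟩ else 0 with hf'
  -- dimension formula
  have dimW : ∀ m, m ≤ N →
      ((finrank ℂ (W ⊓ flagOf v m : Submodule ℂ (EuclideanSpace ℂ ι))) : ℝ) = ∑ i ∈ Finset.range m, p' i := by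
    intro m
    induction m with
    | zero => intro _; simp [flagOf_zero]
    | succ m ih =>
      intro hm
      have hmN : m < N := by omega
      have h1 := hW ⟨m, hmN⟩
      simp only [] at h1
      rw [Finset.sum_range_succ, ← ih (by omega), h1]
      push_cast
      rw [hp']
      simp [hmN]
  -- partial-sum inequality
  have partial_ineq : ∀ m, m ≤ N →
      ((finrank ℂ (W ⊓ flagOf v m : Submodule ℂ (EuclideanSpace ℂ ι))) : ℝ) ≤ ∑ i ∈ Finset.range m, c' i := by
    intro m hm
    set K : Submodule ℂ (EuclideanSpace ℂ ι) := W ⊓ flagOf v m with hK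
    set tb := stdOrthonormalBasis ℂ K with htb
    have htb_on : Orthonormal ℂ (fun s => ((tb s : K) : (EuclideanSpace ℂ ι))) := by
      exact ⟨fun s => tb.orthonormal.1 s, fun s t h => tb.orthonormal.2 h⟩
    -- each tb s has unit "partial Parseval" mass below m
    have hmass : ∀ s, ∑ i ∈ Finset.range m,
        (if h : i < N then ‖(inner ℂ (v ⟨i, h⟩) ((tb s : K) : (EuclideanSpace ℂ ι)) : ℂ)‖ ^ 2 else 0) = 1 := by
      intro s
      have hx1 : ‖((tb s : K) : (EuclideanSpace ℂ ι))‖ = 1 := by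
        rw [Submodule.norm_coe]
        exact tb.orthonormal.1 s
      have hpars := parseval vb ((tb s : K) : (EuclideanSpace ℂ ι))
      rw [hx1, one_pow] at hpars
      have hzero : ∀ i : Fin N, ¬ ((i : ℕ) < m) →
          ‖(inner ℂ (vb i) ((tb s : K) : (EuclideanSpace ℂ ι)) : ℂ)‖ ^ 2 = 0 := by
        intro i hi
        rw [hvb_eq, inner_flag_eq_zero v hv i (by omega) ((tb s).2.2)]
        simp
      -- sum over Fin N restricted to i < m
      have hsplit : ∑ i : Fin N, (if (i : ℕ) < m then ‖(inner ℂ (vb i) ((tb s : K) : (EuclideanSpace ℂ ι)) : ℂ)‖ ^ 2 else 0)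
          = 1 := by
        rw [← hpars]
        apply Finset.sum_congr rfl
        intro i _
        by_cases h : (i : ℕ) < m
        · rw [if_pos h]
        · rw [if_neg h, hzero i h]
      rw [← hsplit]
      rw [show (∑ i : Fin N, (if (i : ℕ) < m then ‖(inner ℂ (vb i) ((tb s : K) : (EuclideanSpace ℂ ι)) : ℂ)‖ ^ 2 else 0))
          = ∑ i ∈ Finset.range N, (fun n => if h : n < N then
              (if n < m then ‖(inner ℂ (v ⟨n, h⟩) ((tb s : K) : (EuclideanSpace ℂ ι)) : ℂ)‖ ^ 2 else 0) else 0) i from ?_]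
      · rw [← Finset.sum_range_add_sum_Ico _ hm]
        have : ∑ i ∈ Finset.Ico m N, (fun n => if h : n < N then
            (if n < m then ‖(inner ℂ (v ⟨n, h⟩) ((tb s : K) : (EuclideanSpace ℂ ι)) : ℂ)‖ ^ 2 else 0) else 0) i = 0 := by
          apply Finset.sum_eq_zero
          intro i hi
          rw [Finset.mem_Ico] at hi
          simp only [dif_pos hi.2, if_neg (by omega : ¬ i < m)]
        rw [this, add_zero]
        apply Finset.sum_congr rfl
        intro i hi
        rw [Finset.mem_range] at hi
        simp only [dif_pos (by omega : i < N), if_pos hi]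
      · rw [← Fin.sum_univ_eq_sum_range]
        apply Finset.sum_congr rfl
        intro i _
        simp only [dif_pos i.isLt, hvb_eq]
    -- Bessel
    have hbessel : ∀ i : Fin N, ∑ s, ‖(inner ℂ ((tb s : K) : (EuclideanSpace ℂ ι)) (v i) : ℂ)‖ ^ 2 ≤
        ‖(orthogonalProjection W (v i) : (EuclideanSpace ℂ ι))‖ ^ 2 := by
      intro i
      have h1 := htb_on.sum_inner_products_le (s := Finset.univ)
        ((orthogonalProjection W (v i) : (EuclideanSpace ℂ ι)))
      refine le_trans (le_of_eq ?_) h1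
      apply Finset.sum_congr rfl
      intro s _
      congr 1
      have hmem : ((tb s : K) : (EuclideanSpace ℂ ι)) ∈ W := (tb s).2.1
      -- ⟪tb s, P_W (v i)⟫ = ⟪tb s, v i⟫
      have h2 : (inner ℂ ((tb s : K) : (EuclideanSpace ℂ ι)) ((orthogonalProjection W (v i) : (EuclideanSpace ℂ ι))) : ℂ)
          = inner ℂ ((tb s : K) : (EuclideanSpace ℂ ι)) (v i) := by
        have := inner_orthogonalProjection_eq_of_mem_left (K := W) ⟨_, hmem⟩ (v i)
        rw [Submodule.coe_inner] at this
        exact this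
      rw [h2]
    calc ((finrank ℂ (W ⊓ flagOf v m : Submodule ℂ (EuclideanSpace ℂ ι))) : ℝ)
        = ∑ s : Fin (finrank ℂ K), (1 : ℝ) := by simp [hK]; rfl
      _ = ∑ s : Fin (finrank ℂ K), ∑ i ∈ Finset.range m,
            (if h : i < N then ‖(inner ℂ (v ⟨i, h⟩) ((tb s : K) : (EuclideanSpace ℂ ι)) : ℂ)‖ ^ 2 else 0) := by
          exact Finset.sum_congr rfl fun s _ => (hmass s).symm
      _ = ∑ i ∈ Finset.range m, ∑ s : Fin (finrank ℂ K),
            (if h : i < N then ‖(inner ℂ (v ⟨i, h⟩) ((tb s : K) : (EuclideanSpace ℂ ι)) : ℂ)‖ ^ 2 else 0) :=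
          Finset.sum_comm
      _ ≤ ∑ i ∈ Finset.range m, c' i := by
          apply Finset.sum_le_sum
          intro i hi
          rw [Finset.mem_range] at hi
          have hiN : i < N := by omega
          simp only [dif_pos hiN, hc']
          refine le_trans (le_of_eq ?_) (hbessel ⟨i, hiN⟩)
          apply Finset.sum_congr rfl
          intro s _
          rw [← norm_inner_symm]
  -- total projection mass
  have total_c : ∑ i ∈ Finset.range N, c' i = (finrank ℂ W : ℝ) := by
    set ub := stdOrthonormalBasis ℂ W with hub
    have hc_eq : ∀ i : Fin N, ‖(orthogonalProjection W (v i) : (EuclideanSpace ℂ ι))‖ ^ 2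
        = ∑ s, ‖(inner ℂ ((ub s : W) : (EuclideanSpace ℂ ι)) (v i) : ℂ)‖ ^ 2 := by
      intro i
      have hp := parseval ub (orthogonalProjection W (v i))
      rw [show ‖(orthogonalProjection W (v i) : (EuclideanSpace ℂ ι))‖
          = ‖orthogonalProjection W (v i)‖ from Submodule.norm_coe _, ← hp]
      apply Finset.sum_congr rfl
      intro s _
      rw [inner_orthogonalProjection_eq_of_mem_left (K := W) (ub s) (v i)]
    have h1 : ∑ i ∈ Finset.range N, c' i = ∑ i : Fin N,
        ‖(orthogonalProjection W (v i) : (EuclideanSpace ℂ ι))‖ ^ 2 := by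
      rw [← Fin.sum_univ_eq_sum_range c' N]
      exact Finset.sum_congr rfl fun i _ => by simp only [hc', dif_pos i.isLt]
    rw [h1]
    calc ∑ i : Fin N, ‖(orthogonalProjection W (v i) : (EuclideanSpace ℂ ι))‖ ^ 2
        = ∑ i : Fin N, ∑ s, ‖(inner ℂ ((ub s : W) : (EuclideanSpace ℂ ι)) (v i) : ℂ)‖ ^ 2 :=
          Finset.sum_congr rfl fun i _ => hc_eq i
      _ = ∑ s, ∑ i : Fin N, ‖(inner ℂ ((ub s : W) : (EuclideanSpace ℂ ι)) (v i) : ℂ)‖ ^ 2 :=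
          Finset.sum_comm
      _ = ∑ s, ∑ i : Fin N, ‖(inner ℂ (vb i) ((ub s : W) : (EuclideanSpace ℂ ι)) : ℂ)‖ ^ 2 := by
          apply Finset.sum_congr rfl; intro s _
          apply Finset.sum_congr rfl; intro i _
          rw [hvb_eq, ← norm_inner_symm]
      _ = ∑ s : Fin (finrank ℂ W), (1 : ℝ) := by
          apply Finset.sum_congr rfl; intro s _
          rw [parseval vb, show ‖((ub s : W) : (EuclideanSpace ℂ ι))‖ = ‖ub s‖
            from Submodule.norm_coe _, ub.orthonormal.1 s, one_pow]
      _ = (finrank ℂ W : ℝ) := by simp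
  -- total pi mass
  have total_p : ∑ i ∈ Finset.range N, p' i = (finrank ℂ W : ℝ) := by
    rw [← dimW N le_rfl, flagOf_top hcard v hv, inf_top_eq]
  -- Abel summation
  have habel := abel_main f (fun n => c' n - p' n) N ?_ ?_ ?_
  · have expand : ∑ i ∈ Finset.range N, f i * (c' i - p' i)
        = ∑ i ∈ Finset.range N, f i * c' i - ∑ i ∈ Finset.range N, f i * p' i := by
      rw [← Finset.sum_sub_distrib]
      exact Finset.sum_congr rfl fun i _ => by ring
    rw [expand] at habel
    have lhs_eq : ∑ i, (π i : ℝ) * lam i = ∑ n ∈ Finset.range N, f n * p' n := by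
      rw [← Fin.sum_univ_eq_sum_range (fun n => f n * p' n) N]
      apply Finset.sum_congr rfl; intro i _
      simp only [hf', hp', dif_pos i.isLt]; ring
    have rhs_eq : ∑ i, lam i * ‖(orthogonalProjection W (v i) : EuclideanSpace ℂ ι)‖ ^ 2
        = ∑ n ∈ Finset.range N, f n * c' n := by
      rw [← Fin.sum_univ_eq_sum_range (fun n => f n * c' n) N]
      apply Finset.sum_congr rfl; intro i _
      simp only [hf', hc', dif_pos i.isLt]
    rw [lhs_eq, rhs_eq]; linarith
  · intro i hi
    simp only [hf', dif_pos (by omega : i + 1 < N), dif_pos (by omega : i < N)]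
    exact hlam (by simp [Fin.mk_le_mk])
  · intro m hm
    rw [Finset.sum_sub_distrib]
    have := partial_ineq m hm
    have := dimW m hm
    linarith
  · rw [Finset.sum_sub_distrib, total_c, total_p, sub_self]

lemma trace_eq_sum_inner {ι κ : Type*} [Fintype ι] [DecidableEq ι] [Fintype κ] [DecidableEq κ]
    (b : OrthonormalBasis κ ℂ (EuclideanSpace ℂ ι)) (T : EuclideanSpace ℂ ι →ₗ[ℂ] EuclideanSpace ℂ ι) :
    LinearMap.trace ℂ _ T = ∑ i, (inner ℂ (b i) (T (b i)) : ℂ) := by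
  rw [LinearMap.trace_eq_matrix_trace ℂ b.toBasis, Matrix.trace]
  apply Finset.sum_congr rfl
  intro i _
  rw [Matrix.diag_apply, LinearMap.toMatrix_apply, OrthonormalBasis.coe_toBasis_repr_apply,
    OrthonormalBasis.repr_apply_apply, OrthonormalBasis.coe_toBasis]

/-- projection as an endomorphism -/
def projL {ι : Type*} [Fintype ι] (K : Submodule ℂ (EuclideanSpace ℂ ι)) :
    EuclideanSpace ℂ ι →ₗ[ℂ] EuclideanSpace ℂ ι :=
  K.subtype ∘ₗ (orthogonalProjection K).toLinearMap

lemma projL_apply {ι : Type*} [Fintype ι] (K : Submodule ℂ (EuclideanSpace ℂ ι))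
    (x : EuclideanSpace ℂ ι) : projL K x = (orthogonalProjection K x : EuclideanSpace ℂ ι) := rfl

lemma trace_comp_proj {ι : Type*} [Fintype ι] [DecidableEq ι] {N : ℕ}
    (hcard : Fintype.card ι = N)
    (M : Matrix ι ι ℂ) (hM : M.IsHermitian)
    (v : Fin N → EuclideanSpace ℂ ι) (hv : Orthonormal ℂ v)
    (μ : Fin N → ℝ) (heig : ∀ i, Matrix.toEuclideanLin M (v i) = (μ i : ℂ) • v i)
    (K : Submodule ℂ (EuclideanSpace ℂ ι)) :
    LinearMap.trace ℂ _ (Matrix.toEuclideanLin M ∘ₗ projL K)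
      = ((∑ i, μ i * ‖(orthogonalProjection K (v i) : EuclideanSpace ℂ ι)‖ ^ 2 : ℝ) : ℂ) := by
  have hspan : ⊤ ≤ Submodule.span ℂ (Set.range v) := by
    rw [hv.linearIndependent.span_eq_top_of_card_eq_finrank'
      (by simp [hcard, finrank_euclideanSpace])]
  have hsym : (Matrix.toEuclideanLin M).IsSymmetric := Matrix.isHermitian_iff_isSymmetric.1 hM
  set vb : OrthonormalBasis (Fin N) ℂ (EuclideanSpace ℂ ι) := OrthonormalBasis.mk hv hspan with hvb
  have hvb_eq : ∀ i, vb i = v i := fun i => by rw [hvb, OrthonormalBasis.coe_mk]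
  rw [trace_eq_sum_inner vb]
  push_cast
  apply Finset.sum_congr rfl
  intro i _
  rw [Function.comp_apply, projL_apply, hvb_eq]
  set z : EuclideanSpace ℂ ι := (orthogonalProjection K (v i) : EuclideanSpace ℂ ι) with hz
  have h1 : (inner ℂ (v i) (Matrix.toEuclideanLin M z) : ℂ)
      = inner ℂ (Matrix.toEuclideanLin M (v i)) z := (hsym (v i) z).symm
  have h2 : (inner ℂ (Matrix.toEuclideanLin M (v i)) z : ℂ) = (μ i : ℂ) * inner ℂ (v i) z := by
    rw [heig i, inner_smul_left, Complex.conj_ofReal]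
  have h3 : (inner ℂ (v i) z : ℂ) = (‖z‖ ^ 2 : ℝ) := by
    have horth : (inner ℂ (v i - z) z : ℂ) = 0 := by
      have hm : v i - z ∈ Kᗮ := sub_starProjection_mem_orthogonal (K := K) (v i)
      exact (Submodule.mem_orthogonal' K _).1 hm z (orthogonalProjection K (v i)).2
    have := inner_sub_left (𝕜 := ℂ) (v i) z z
    rw [horth] at this
    have h4 : (inner ℂ (v i) z : ℂ) = inner ℂ z z := by linear_combination -this
    rw [h4, inner_self_eq_norm_sq_to_K]
    norm_cast
  rw [h1, h2, h3]
  norm_cast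

lemma slice_single {dA dB : ℕ} (k : Fin dA) (l j : Fin dB) :
    sliceMap dA dB j (EuclideanSpace.single (k, l) (1 : ℂ))
      = if j = l then EuclideanSpace.single k (1 : ℂ) else 0 := by
  ext i
  have h1 : sliceMap dA dB j (EuclideanSpace.single (k, l) (1 : ℂ)) i
      = EuclideanSpace.single (k, l) (1 : ℂ) (i, j) := rfl
  rw [h1, EuclideanSpace.single_apply]
  by_cases h : j = l
  · subst h
    simp only [if_pos rfl, EuclideanSpace.single_apply]
    by_cases h2 : i = k
    · simp [h2]
    · simp [h2, Prod.ext_iff]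
  · simp only [if_neg h]
    have : ((i, j) : Fin dA × Fin dB) ≠ (k, l) := by simp [Prod.ext_iff]; tauto
    simp [this]

lemma proj_phiMap {dA dB : ℕ} (W : Submodule ℂ (EuclideanSpace ℂ (Fin dA)))
    (x : EuclideanSpace ℂ (Fin dA × Fin dB)) :
    (orthogonalProjection (phiMap (dB := dB) W) x : EuclideanSpace ℂ (Fin dA × Fin dB))
      = WithLp.toLp 2 (fun p => (orthogonalProjection W (sliceMap dA dB p.2 x) : EuclideanSpace ℂ (Fin dA)) p.1) := by
  set Lx : EuclideanSpace ℂ (Fin dA × Fin dB) :=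
    WithLp.toLp 2 (fun p => (orthogonalProjection W (sliceMap dA dB p.2 x) : EuclideanSpace ℂ (Fin dA)) p.1) with hLx
  apply eq_starProjection_of_mem_of_inner_eq_zero
  · rw [phiMap, Submodule.mem_iInf]
    intro j
    rw [Submodule.mem_comap]
    have h : sliceMap dA dB j Lx = (orthogonalProjection W (sliceMap dA dB j x) :
        EuclideanSpace ℂ (Fin dA)) := rfl
    rw [h]
    exact (orthogonalProjection W (sliceMap dA dB j x)).2
  · intro z hz
    have hz' : ∀ j, sliceMap dA dB j z ∈ W := by
      intro j
      have := (Submodule.mem_iInf _).1 hz j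
      exact Submodule.mem_comap.1 this
    have key : (inner ℂ (x - Lx) z : ℂ)
        = ∑ j : Fin dB, (inner ℂ (sliceMap dA dB j x -
            (orthogonalProjection W (sliceMap dA dB j x) : EuclideanSpace ℂ (Fin dA)))
            (sliceMap dA dB j z) : ℂ) := by
      rw [PiLp.inner_apply, Fintype.sum_prod_type, Finset.sum_comm]
      apply Finset.sum_congr rfl
      intro j _
      rw [PiLp.inner_apply]
      apply Finset.sum_congr rfl
      intro i _
      congr 1
    rw [key]
    apply Finset.sum_eq_zero
    intro j _
    have ha : sliceMap dA dB j x -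
        (orthogonalProjection W (sliceMap dA dB j x) : EuclideanSpace ℂ (Fin dA)) ∈ Wᗮ :=
      sub_starProjection_mem_orthogonal (K := W) _
    exact (Submodule.mem_orthogonal' W _).1 ha _ (hz' j)

lemma toEuclideanLin_apply' {ι : Type*} [Fintype ι] [DecidableEq ι] (M : Matrix ι ι ℂ)
    (y : EuclideanSpace ℂ ι) (k : ι) :
    Matrix.toEuclideanLin M y k = ∑ i, M k i * y i := rfl

lemma trace_sum_zero {dA dB : ℕ} (XA : Matrix (Fin dA) (Fin dA) ℂ)
    (YAB : Matrix (Fin dA × Fin dB) (Fin dA × Fin dB) ℂ)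
    (hXY : XA = -partialTraceB YAB) (W : Submodule ℂ (EuclideanSpace ℂ (Fin dA))) :
    LinearMap.trace ℂ _ (Matrix.toEuclideanLin XA ∘ₗ projL W)
    + LinearMap.trace ℂ _ (Matrix.toEuclideanLin YAB ∘ₗ projL (phiMap (dB := dB) W)) = 0 := by
  rw [trace_eq_sum_inner (EuclideanSpace.basisFun (Fin dA) ℂ),
      trace_eq_sum_inner (EuclideanSpace.basisFun (Fin dA × Fin dB) ℂ)]
  have hT1 : ∑ k, (inner ℂ (EuclideanSpace.basisFun (Fin dA) ℂ k)
      ((Matrix.toEuclideanLin XA ∘ₗ projL W) (EuclideanSpace.basisFun (Fin dA) ℂ k)) : ℂ)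
      = ∑ k, ∑ i, XA k i *
        (orthogonalProjection W (EuclideanSpace.single k 1) : EuclideanSpace ℂ (Fin dA)) i := by
    apply Finset.sum_congr rfl
    intro k _
    rw [EuclideanSpace.basisFun_apply, EuclideanSpace.inner_single_left]
    simp only [map_one, one_mul]
    rw [LinearMap.comp_apply, projL_apply, toEuclideanLin_apply']
  have hT2 : ∑ q, (inner ℂ (EuclideanSpace.basisFun (Fin dA × Fin dB) ℂ q)
      ((Matrix.toEuclideanLin YAB ∘ₗ projL (phiMap (dB := dB) W))
        (EuclideanSpace.basisFun (Fin dA × Fin dB) ℂ q)) : ℂ)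
      = ∑ k, ∑ l, ∑ i, YAB (k, l) (i, l) *
        (orthogonalProjection W (EuclideanSpace.single k 1) : EuclideanSpace ℂ (Fin dA)) i := by
    rw [Fintype.sum_prod_type]
    apply Finset.sum_congr rfl
    intro k _
    apply Finset.sum_congr rfl
    intro l _
    rw [EuclideanSpace.basisFun_apply, EuclideanSpace.inner_single_left]
    simp only [map_one, one_mul]
    rw [LinearMap.comp_apply, projL_apply, toEuclideanLin_apply']
    rw [proj_phiMap]
    rw [Fintype.sum_prod_type]
    rw [Finset.sum_comm]
    have hcollapse : ∀ j : Fin dB, ∀ i : Fin dA,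
        (orthogonalProjection W (sliceMap dA dB j (EuclideanSpace.single (k, l) (1:ℂ))) :
          EuclideanSpace ℂ (Fin dA)) i
        = if j = l then (orthogonalProjection W (EuclideanSpace.single k 1) :
            EuclideanSpace ℂ (Fin dA)) i else 0 := by
      intro j i
      rw [slice_single]
      by_cases h : j = l
      · rw [if_pos h, if_pos h]
      · rw [if_neg h, if_neg h, map_zero]
        rfl
    rw [Finset.sum_eq_single l]
    · apply Finset.sum_congr rfl
      intro i _
      have := hcollapse l i
      rw [if_pos rfl] at this
      simp only [this]
    · intro j _ hj
      apply Finset.sum_eq_zero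
      intro i _
      have := hcollapse j i
      rw [if_neg hj] at this
      simp only [this, mul_zero]
    · intro h
      exact absurd (Finset.mem_univ l) h
  rw [hT1, hT2, hXY]
  rw [← Finset.sum_add_distrib]
  apply Finset.sum_eq_zero
  intro k _
  have hXk : ∀ i, (-partialTraceB YAB : Matrix (Fin dA) (Fin dA) ℂ) k i
      = -∑ l, YAB (k, l) (i, l) := by
    intro i
    simp [partialTraceB]
  rw [Finset.sum_comm (γ := Fin dB)]
  rw [← Finset.sum_add_distrib]
  apply Finset.sum_eq_zero
  intro i _
  rw [hXk i, neg_mul, Finset.sum_mul]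
  ring

/-- Theorem 4.4 of the paper: if `X_A = -Tr_B(Y_{AB})` and some `W ∈ S_π(X_A)` has
`φ(W) = W ⊗ B ∈ S_σ(Y_{AB})`, then `∑ π(i) λ̃_i + ∑ σ(i) λ_i ≤ 0`. -/
theorem variational_inequality {dA dB : ℕ}
    (XA : Matrix (Fin dA) (Fin dA) ℂ) (hXA : XA.IsHermitian)
    (YAB : Matrix (Fin dA × Fin dB) (Fin dA × Fin dB) ℂ) (hYAB : YAB.IsHermitian)
    (hXY : XA = -partialTraceB YAB)
    (tlam : Fin dA → ℝ) (htlam : Antitone tlam)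
    (lam : Fin (dA * dB) → ℝ) (hlam : Antitone lam)
    (v : Fin dA → EuclideanSpace ℂ (Fin dA)) (hv : Orthonormal ℂ v)
    (hveig : ∀ i, Matrix.toEuclideanLin XA (v i) = (tlam i : ℂ) • v i)
    (w : Fin (dA * dB) → EuclideanSpace ℂ (Fin dA × Fin dB)) (hw : Orthonormal ℂ w)
    (hweig : ∀ i, Matrix.toEuclideanLin YAB (w i) = (lam i : ℂ) • w i)
    (π : Fin dA → ℕ) (hπ : ∀ i, π i ≤ 1)
    (σ : Fin (dA * dB) → ℕ) (hσ : ∀ i, σ i ≤ 1)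
    (hint : ∃ W : Submodule ℂ (EuclideanSpace ℂ (Fin dA)),
      W ∈ schubertCell v π ∧ phiMap (dB := dB) W ∈ schubertCell w σ) :
    (∑ i, (π i : ℝ) * tlam i) + (∑ i, (σ i : ℝ) * lam i) ≤ 0 := by
  obtain ⟨W, hW1, hW2⟩ := hint
  have hcardA : Fintype.card (Fin dA) = dA := Fintype.card_fin dA
  have hcardAB : Fintype.card (Fin dA × Fin dB) = dA * dB := by simp
  have b1 := schubert_bound hcardA v hv tlam htlam π W hW1
  have b2 := schubert_bound hcardAB w hw lam hlam σ (phiMap (dB := dB) W) hW2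
  have t1 := trace_comp_proj hcardA XA hXA v hv tlam hveig W
  have t2 := trace_comp_proj hcardAB YAB hYAB w hw lam hweig (phiMap (dB := dB) W)
  have t0 := trace_sum_zero XA YAB hXY W
  rw [t1, t2] at t0
  have hsum : (∑ i, tlam i * ‖(orthogonalProjection W (v i) : EuclideanSpace ℂ (Fin dA))‖ ^ 2)
      + (∑ i, lam i * ‖(orthogonalProjection (phiMap (dB := dB) W) (w i) :
          EuclideanSpace ℂ (Fin dA × Fin dB))‖ ^ 2) = 0 := by
    exact_mod_cast t0
  linarith [b1, b2]
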